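/- Let $1 \le i \le d$ be integers. For a finite subset $\mu = \{\mu_1 > \mu_2 > \cdots > \mu_k\}$ of $\{1,\ldots,d\}$, define the $q$-multinomial $\binom{d}{\mu}_q = \binom{d}{\mu_1}_q \binom{\mu_1}{\mu_2}_q \cdots \binom{\mu_{k-1}}{\mu_k}_q$ (with $\binom{d}{\emptyset}_q = 1$). Then $\sum_{\mu \subseteq \{1,\ldots,i-1\}} \binom{d}{\mu \cup \{i\}}_q \prod_{j\in\mu} q^{j^2} \prod_{j \in \{1,\ldots,i-1\}\setminus\mu} (1-q^{j^2}) = \binom{d}{i}_q \prod_{j=1}^{i} \frac{1-q^{j^2}}{1-q^{j}}$ as rational functions in $q$. -/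

import Mathlib

/-- The indeterminate `q`, viewed in the field of rational functions over `ℚ`. -/
noncomputable def q : RatFunc ℚ := RatFunc.X

/-- The Gaussian (q-)binomial coefficient `(n choose k)_q`. -/
noncomputable def qbinom (n k : ℕ) : RatFunc ℚ :=
  ∏ i ∈ Finset.range k, (1 - q ^ (n - i)) / (1 - q ^ (i + 1))

/-- The `q`-multinomial coefficient `(d choose μ)_q` attached to a finite set
`μ = {μ₁ > μ₂ > ⋯ > μ_k}`: the product
`(d choose μ₁)_q (μ₁ choose μ₂)_q ⋯ (μ_{k-1} choose μ_k)_q`,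
with `(d choose ∅)_q = 1`. -/
noncomputable def qmultinom (d : ℕ) (μ : Finset ℕ) : RatFunc ℚ :=
  (((d :: (μ.sort (· ≤ ·)).reverse).zip ((μ.sort (· ≤ ·)).reverse)).map
    (fun pr => qbinom pr.1 pr.2)).prod

/-
Splitting off the largest element of `μ ∪ {i}` gives
`(d choose μ ∪ {i})_q = (d choose i)_q (i choose μ)_q`, so the claim reduces to
`T(i, i-1) = ∏_{j ≤ i} (1 - q^{j²}) / (1 - q^j)`, where `T(n, k)` (`subsetWeightSum n k`) is the
weighted sum over `μ ⊆ {1, …, k}` with `(n choose μ)_q` in place of `(d choose μ ∪ {i})_q`.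
Conditioning on whether `k ∈ μ` gives a recursion for `T(n, k)`, solved by
`T(n, k) = ∏_{j ≤ k} (1 - q^{j²}) / (1 - q^j) · f(n, k)` with
`f(n, k) = ∑_{j ≤ k} q^{j²} (n choose j)_q ∏_{m=j+1}^k (1 - q^m)` (`qbinomWeightSum n k`), as soon
as `f(k+1, k) = (1 - q^{(k+1)²}) / (1 - q^{k+1})`. By the recursion of `f` in `k` this amounts to
`f(n, n) = 1`, which is the Durfee square identity
`∑_{a+b=n} q^{a²} / ((q;q)_a² (q;q)_b) = 1 / (q;q)_n²`.
-/

open Finset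

lemma one_sub_q_pow_ne_zero {m : ℕ} (hm : m ≠ 0) : (1 : RatFunc ℚ) - q ^ m ≠ 0 := by
  have hpoly : (1 : Polynomial ℚ) - Polynomial.X ^ m ≠ 0 := fun h => by
    simpa [Polynomial.coeff_one, hm, eq_comm] using congrArg (Polynomial.coeff · m) h
  simpa [q] using RatFunc.algebraMap_ne_zero hpoly

/-- The `q`-Pochhammer symbol `(q;q)_m`. -/
noncomputable def qPoch (m : ℕ) : RatFunc ℚ := ∏ j ∈ range m, (1 - q ^ (j + 1))

lemma qPoch_zero : qPoch 0 = 1 := rfl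

lemma qPoch_succ (m : ℕ) : qPoch (m + 1) = qPoch m * (1 - q ^ (m + 1)) :=
  prod_range_succ _ m

lemma qPoch_ne_zero (m : ℕ) : qPoch m ≠ 0 :=
  prod_ne_zero_iff.mpr fun j _ => one_sub_q_pow_ne_zero j.add_one_ne_zero

lemma qPoch_mul_prod_Ico {j k : ℕ} (h : j ≤ k) :
    qPoch j * ∏ m ∈ Ico j k, (1 - q ^ (m + 1)) = qPoch k :=
  prod_range_mul_prod_Ico _ h

lemma prod_range_one_sub_q_pow_sub_mul_qPoch {n k : ℕ} (h : k ≤ n) :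
    (∏ i ∈ range k, (1 - q ^ (n - i))) * qPoch (n - k) = qPoch n := by
  induction k with
  | zero => simp
  | succ j ih =>
    have hj : n - j = n - (j + 1) + 1 := by omega
    rw [prod_range_succ, hj, mul_assoc, mul_comm (1 - _), ← qPoch_succ, ← hj, ih (by omega)]

lemma qbinom_mul_qPoch_mul_qPoch {n k : ℕ} (h : k ≤ n) :
    qbinom n k * (qPoch k * qPoch (n - k)) = qPoch n := by
  rw [qbinom, prod_div_distrib, ← qPoch, ← prod_range_one_sub_q_pow_sub_mul_qPoch h]
  field_simp [qPoch_ne_zero k]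

lemma qbinom_eq_div {n k : ℕ} (h : k ≤ n) :
    qbinom n k = qPoch n / (qPoch k * qPoch (n - k)) :=
  eq_div_of_mul_eq (mul_ne_zero (qPoch_ne_zero k) (qPoch_ne_zero (n - k)))
    (qbinom_mul_qPoch_mul_qPoch h)

lemma qbinom_self (n : ℕ) : qbinom n n = 1 := by
  simpa [qPoch_zero, qPoch_ne_zero] using qbinom_mul_qPoch_mul_qPoch le_rfl (n := n)

noncomputable def durfeeTerm (a b : ℕ) : RatFunc ℚ := q ^ (a ^ 2) / (qPoch a ^ 2 * qPoch b)

lemma one_sub_q_pow_mul_durfeeTerm_succ_right (a b : ℕ) :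
    (1 - q ^ (b + 1)) * durfeeTerm a (b + 1) = durfeeTerm a b := by
  have := one_sub_q_pow_ne_zero b.add_one_ne_zero
  simp only [durfeeTerm, qPoch_succ]
  field_simp [qPoch_ne_zero a, qPoch_ne_zero b]

lemma one_sub_q_pow_sq_mul_durfeeTerm_succ_left (a b : ℕ) :
    (1 - q ^ (a + 1)) ^ 2 * durfeeTerm (a + 1) b = q ^ (2 * a + 1) * durfeeTerm a b := by
  have := one_sub_q_pow_ne_zero a.add_one_ne_zero
  simp only [durfeeTerm, qPoch_succ]
  field_simp [qPoch_ne_zero a, qPoch_ne_zero b]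
  ring

theorem sum_antidiagonal_durfeeTerm (n : ℕ) :
    ∑ p ∈ antidiagonal n, durfeeTerm p.1 p.2 = (qPoch n ^ 2)⁻¹ := by
  induction n with
  | zero => simp [durfeeTerm, qPoch_zero]
  | succ n ih =>
    -- Split `(1 - q^{a+b})² = (1 - q^{2a+b})(1 - q^b) + q^b (1 - q^a)²`; shifting `b` in the first
    -- sum and `a` in the second turns both into sums over `antidiagonal n` that add up to `ih`.
    have hsplit : (1 - q ^ (n + 1)) ^ 2 * ∑ p ∈ antidiagonal (n + 1), durfeeTerm p.1 p.2 =
        ∑ p ∈ antidiagonal (n + 1), (1 - q ^ (2 * p.1 + p.2)) * (1 - q ^ p.2) * durfeeTerm p.1 p.2 +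
        ∑ p ∈ antidiagonal (n + 1), q ^ p.2 * ((1 - q ^ p.1) ^ 2 * durfeeTerm p.1 p.2) := by
      rw [mul_sum, ← sum_add_distrib]
      refine sum_congr rfl fun p hp => ?_
      rw [← mem_antidiagonal.mp hp]
      ring
    have hfirst : ∑ p ∈ antidiagonal (n + 1),
        (1 - q ^ (2 * p.1 + p.2)) * (1 - q ^ p.2) * durfeeTerm p.1 p.2 =
        ∑ p ∈ antidiagonal n, (1 - q ^ (2 * p.1 + p.2 + 1)) * durfeeTerm p.1 p.2 := by
      simp only [Nat.sum_antidiagonal_succ', pow_zero, sub_self, mul_zero, zero_mul, zero_add,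
        mul_assoc, one_sub_q_pow_mul_durfeeTerm_succ_right, ← add_assoc]
    have hsecond : ∑ p ∈ antidiagonal (n + 1), q ^ p.2 * ((1 - q ^ p.1) ^ 2 * durfeeTerm p.1 p.2) =
        ∑ p ∈ antidiagonal n, q ^ (2 * p.1 + p.2 + 1) * durfeeTerm p.1 p.2 := by
      simp only [Nat.sum_antidiagonal_succ, pow_zero, sub_self, zero_pow two_ne_zero, zero_mul,
        mul_zero, zero_add, one_sub_q_pow_sq_mul_durfeeTerm_succ_left]
      refine sum_congr rfl fun p _ => ?_
      ring
    have h := one_sub_q_pow_ne_zero n.add_one_ne_zero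
    rw [hfirst, hsecond, ← sum_add_distrib] at hsplit
    simp only [← add_mul, sub_add_cancel, one_mul, ih] at hsplit
    rw [qPoch_succ, mul_pow, mul_inv, ← hsplit]
    field_simp

noncomputable def qbinomWeightSum (n k : ℕ) : RatFunc ℚ :=
  ∑ j ∈ range (k + 1), q ^ (j ^ 2) * qbinom n j * ∏ m ∈ Ico j k, (1 - q ^ (m + 1))

lemma qbinomWeightSum_zero (n : ℕ) : qbinomWeightSum n 0 = 1 := by
  simp [qbinomWeightSum, qbinom]

lemma qbinomWeightSum_succ (n k : ℕ) :
    qbinomWeightSum n (k + 1) =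
      q ^ ((k + 1) ^ 2) * qbinom n (k + 1) + (1 - q ^ (k + 1)) * qbinomWeightSum n k := by
  rw [qbinomWeightSum, sum_range_succ, Ico_self, prod_empty, mul_one, add_comm,
    qbinomWeightSum, mul_sum]
  congr 1
  refine sum_congr rfl fun j hj => ?_
  rw [prod_Ico_succ_top (Nat.lt_succ_iff.mp (mem_range.mp hj))]
  ring

lemma qbinomWeightSum_self (n : ℕ) : qbinomWeightSum n n = 1 := by
  have hterm : ∀ j ∈ range (n + 1),
      q ^ (j ^ 2) * qbinom n j * ∏ m ∈ Ico j n, (1 - q ^ (m + 1)) =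
        qPoch n ^ 2 * durfeeTerm j (n - j) := by
    intro j hj
    have hjn : j ≤ n := Nat.lt_succ_iff.mp (mem_range.mp hj)
    rw [qbinom_eq_div hjn, durfeeTerm, ← qPoch_mul_prod_Ico hjn]
    field_simp [qPoch_ne_zero j, qPoch_ne_zero (n - j)]
  rw [qbinomWeightSum, sum_congr rfl hterm, ← mul_sum, ← Nat.sum_antidiagonal_eq_sum_range_succ
    (fun a b => durfeeTerm a b), sum_antidiagonal_durfeeTerm]
  exact mul_inv_cancel₀ (pow_ne_zero 2 (qPoch_ne_zero n))

lemma qbinomWeightSum_succ_self (k : ℕ) :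
    qbinomWeightSum (k + 1) k = (1 - q ^ ((k + 1) ^ 2)) / (1 - q ^ (k + 1)) := by
  have h := qbinomWeightSum_succ (k + 1) k
  rw [qbinomWeightSum_self, qbinom_self] at h
  rw [eq_div_iff (one_sub_q_pow_ne_zero k.add_one_ne_zero)]
  linear_combination -h

lemma sort_insert_of_forall_lt {k : ℕ} {μ : Finset ℕ} (h : ∀ x ∈ μ, x < k) :
    (insert k μ).sort (· ≤ ·) = μ.sort (· ≤ ·) ++ [k] := by
  have hk : k ∉ μ := fun hkμ => (h k hkμ).false
  refine List.Perm.eq_of_pairwise' (pairwise_sort _ _) ?_ ?_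
  · exact List.pairwise_append.mpr ⟨pairwise_sort _ _, List.pairwise_singleton _ _,
      fun x hx y hy => (List.mem_singleton.mp hy).symm ▸ (h x ((mem_sort _).mp hx)).le⟩
  · exact (sort_perm_toList _ _).trans <| (toList_insert hk).trans <|
      (List.Perm.cons k (sort_perm_toList μ _).symm).trans (List.perm_append_singleton _ _).symm

lemma qmultinom_insert_of_forall_lt {n k : ℕ} {μ : Finset ℕ} (h : ∀ x ∈ μ, x < k) :
    qmultinom n (insert k μ) = qbinom n k * qmultinom k μ := by
  rw [qmultinom, qmultinom, sort_insert_of_forall_lt h, List.reverse_append, List.reverse_singleton,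
    List.singleton_append]
  rfl

lemma forall_lt_succ_of_mem_powerset_Icc {k : ℕ} {μ : Finset ℕ} (hμ : μ ∈ (Icc 1 k).powerset) :
    ∀ x ∈ μ, x < k + 1 :=
  fun _ hx => Nat.lt_succ_of_le (mem_Icc.mp (mem_powerset.mp hμ hx)).2

noncomputable def subsetWeightSum (n k : ℕ) : RatFunc ℚ :=
  ∑ μ ∈ (Icc 1 k).powerset,
    qmultinom n μ * (∏ j ∈ μ, q ^ (j ^ 2)) * ∏ j ∈ Icc 1 k \ μ, (1 - q ^ (j ^ 2))

lemma subsetWeightSum_zero (n : ℕ) : subsetWeightSum n 0 = 1 := by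
  simp [subsetWeightSum, qmultinom]

lemma subsetWeightSum_succ (n k : ℕ) :
    subsetWeightSum n (k + 1) = (1 - q ^ ((k + 1) ^ 2)) * subsetWeightSum n k
      + qbinom n (k + 1) * q ^ ((k + 1) ^ 2) * subsetWeightSum (k + 1) k := by
  have hk : k + 1 ∉ Icc 1 k := by simp
  have hIcc : insert (k + 1) (Icc 1 k) = Icc 1 (k + 1) := insert_Icc_right_eq_Icc_succ (by simp)
  rw [subsetWeightSum, ← hIcc, sum_powerset_insert hk,
    subsetWeightSum, subsetWeightSum, mul_sum, mul_sum]
  congr 1 <;> refine sum_congr rfl fun μ hμ => ?_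
  · have hkμ : k + 1 ∉ μ := fun h => hk (mem_powerset.mp hμ h)
    rw [insert_sdiff_of_notMem _ hkμ, prod_insert (fun h => hk (mem_sdiff.mp h).1)]
    ring
  · have hlt := forall_lt_succ_of_mem_powerset_Icc hμ
    rw [insert_sdiff_insert, sdiff_insert_of_notMem hk, qmultinom_insert_of_forall_lt hlt,
      prod_insert fun h => (hlt _ h).false]
    ring

lemma subsetWeightSum_eq (k n : ℕ) :
    subsetWeightSum n k =
      (∏ j ∈ Icc 1 k, (1 - q ^ (j ^ 2)) / (1 - q ^ j)) * qbinomWeightSum n k := by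
  induction k generalizing n with
  | zero => simp [subsetWeightSum_zero, qbinomWeightSum_zero]
  | succ k ih =>
    rw [subsetWeightSum_succ, ih, ih, qbinomWeightSum_succ_self, qbinomWeightSum_succ,
      prod_Icc_succ_top (by omega)]
    field_simp [one_sub_q_pow_ne_zero k.add_one_ne_zero]
    ring

lemma subsetWeightSum_succ_self (k : ℕ) :
    subsetWeightSum (k + 1) k = ∏ j ∈ Icc 1 (k + 1), (1 - q ^ (j ^ 2)) / (1 - q ^ j) := by
  rw [subsetWeightSum_eq, qbinomWeightSum_succ_self, prod_Icc_succ_top (by omega)]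

theorem qmultinom_subset_sum_general (d i : ℕ) :
    ∑ μ ∈ (Finset.Icc 1 (i - 1)).powerset,
      qmultinom d (insert i μ) * (∏ j ∈ μ, q ^ (j ^ 2)) *
        ∏ j ∈ Finset.Icc 1 (i - 1) \ μ, (1 - q ^ (j ^ 2))
    = qbinom d i * ∏ j ∈ Finset.Icc 1 i, (1 - q ^ (j ^ 2)) / (1 - q ^ j) := by
  cases i with
  | zero => simp [qmultinom, qbinom]
  | succ k =>
    rw [Nat.add_sub_cancel, ← subsetWeightSum_succ_self, subsetWeightSum, mul_sum]
    refine sum_congr rfl fun μ hμ => ?_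
    rw [qmultinom_insert_of_forall_lt (forall_lt_succ_of_mem_powerset_Icc hμ)]
    ring

/-- For `1 ≤ i ≤ d`:
`∑_{μ ⊆ {1,…,i-1}} (d choose μ∪{i})_q ∏_{j∈μ} q^(j²) ∏_{j∈{1,…,i-1}∖μ} (1-q^(j²))
  = (d choose i)_q ∏_{j=1}^{i} (1-q^(j²))/(1-q^j)`. -/
theorem qmultinom_subset_sum (d i : ℕ) (h1 : 1 ≤ i) (h2 : i ≤ d) :
    ∑ μ ∈ (Finset.Icc 1 (i - 1)).powerset,
      qmultinom d (insert i μ) * (∏ j ∈ μ, q ^ (j ^ 2)) *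
        ∏ j ∈ Finset.Icc 1 (i - 1) \ μ, (1 - q ^ (j ^ 2))
    = qbinom d i * ∏ j ∈ Finset.Icc 1 i, (1 - q ^ (j ^ 2)) / (1 - q ^ j) :=
  qmultinom_subset_sum_general d i
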